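/- Let k, l, r be positive integers with l ≥ k, let α > 0 satisfy Σ_{i=k+1}^{k+l} α^{i/k} = Σ_{i=1}^{k} α^{i/k}, and let G = ℝ^r ⋊ ℚ with multiplication (x, u)(y, v) = (x + α^u y, u + v) (scalar multiplication acting diagonally on ℝ^r). For i = 0, 1, …, r let e_i ∈ G have last component 1/k, i-th component α^{1/k} if i ≥ 1, and all other components 0. Then e_i^k e_j^l = e_j^k e_i^l for all i, j ∈ {0, 1, …, r}. -/

import Mathlib

/-- Multiplication of the semidirect product `ℝ^r ⋊ ℚ` under the diagonal
action `u ↦ (x ↦ α^u • x)`. -/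
noncomputable def sdMulV (r : ℕ) (α : ℝ) (p q : (Fin r → ℝ) × ℚ) :
    (Fin r → ℝ) × ℚ :=
  (p.1 + α ^ ((p.2 : ℝ)) • q.1, p.2 + q.2)

/-- `j`-th power with respect to `sdMulV` (the identity is `(0, 0)`). -/
noncomputable def sdPowV (r : ℕ) (α : ℝ) (p : (Fin r → ℝ) × ℚ) :
    ℕ → (Fin r → ℝ) × ℚ
  | 0 => (0, 0)
  | j + 1 => sdMulV r α (sdPowV r α p j) p

/-- The generator `e_i` : last component `1/k`, `i`-th component `α^(1/k)`
for `1 ≤ i ≤ r`, all other components `0` (`e 0` has vector part `0`). -/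
noncomputable def genE (r k : ℕ) (α : ℝ) (i : ℕ) : (Fin r → ℝ) × ℚ :=
  (fun j : Fin r => if (j : ℕ) + 1 = i then α ^ (1 / (k : ℝ)) else 0,
    1 / (k : ℚ))

/-
Writing `g = (v, t)`, induction gives `g ^ n = ((∑ m < n, α ^ (t m)) • v, n t)`.
For the generators `t = 1/k`; with `β = α ^ (1/k)` and `S n = ∑ m < n, β ^ m` the
hypothesis on `α` reads `β ^ (k+1) S l = β S k`, i.e. `S k = α S l`.  Hence the
vector part of `e_i ^ k e_j ^ l` is `S k v_i + α S l v_j = α S l (v_i + v_j)`,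
which is symmetric in `i` and `j`.
-/

theorem sdPowV_eq (r : ℕ) (α : ℝ) (p : (Fin r → ℝ) × ℚ) (n : ℕ) :
    sdPowV r α p n = ((∑ m ∈ Finset.range n, α ^ ((p.2 : ℝ) * m)) • p.1, n * p.2) := by
  induction n with
  | zero => simp [sdPowV]
  | succ n ih =>
    rw [sdPowV, ih, sdMulV]
    ext1
    · simp [Finset.sum_range_succ, add_smul, mul_comm]
    · push_cast; ring

theorem sdMulV_sdPowV_swap (r : ℕ) (α : ℝ) (p q : (Fin r → ℝ) × ℚ) (hpq : p.2 = q.2)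
    (k l : ℕ)
    (hsum : ∑ m ∈ Finset.range k, α ^ ((p.2 : ℝ) * m)
      = α ^ ((k : ℝ) * p.2) * ∑ m ∈ Finset.range l, α ^ ((p.2 : ℝ) * m)) :
    sdMulV r α (sdPowV r α p k) (sdPowV r α q l)
      = sdMulV r α (sdPowV r α q k) (sdPowV r α p l) := by
  simp only [sdPowV_eq, sdMulV, ← hpq, Rat.cast_mul, Rat.cast_natCast, smul_smul, ← hsum]
  ext1
  · exact add_comm _ _
  · rfl

theorem Finset.sum_Icc_pow_eq_pow_mul_sum_range {R : Type*} [Semiring R] (x : R) (a n : ℕ) :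
    ∑ i ∈ Finset.Icc (a + 1) (a + n), x ^ i = x ^ (a + 1) * ∑ m ∈ Finset.range n, x ^ m := by
  rw [← Finset.Ico_add_one_right_eq_Icc, Finset.sum_Ico_eq_sum_range, Finset.mul_sum,
    show a + n + 1 - (a + 1) = n by omega]
  exact Finset.sum_congr rfl fun m _ => pow_add x (a + 1) m

theorem sum_range_rpow_eq_mul_sum_range (k l : ℕ) (hk : 0 < k) (α : ℝ) (hα : 0 < α)
    (hroot : ∑ i ∈ Finset.Icc (k + 1) (k + l), α ^ ((i : ℝ) / (k : ℝ))
              = ∑ i ∈ Finset.Icc 1 k, α ^ ((i : ℝ) / (k : ℝ))) :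
    ∑ m ∈ Finset.range k, (α ^ (1 / (k : ℝ))) ^ m
      = α * ∑ m ∈ Finset.range l, (α ^ (1 / (k : ℝ))) ^ m := by
  set β := α ^ (1 / (k : ℝ))
  have hβ : 0 < β := Real.rpow_pos_of_pos hα _
  have hβk : β ^ k = α := by
    rw [← Real.rpow_mul_natCast hα.le, one_div_mul_cancel (by positivity), Real.rpow_one]
  have hpow (i : ℕ) : α ^ ((i : ℝ) / k) = β ^ i := by
    rw [← Real.rpow_mul_natCast hα.le, one_div_mul_eq_div]
  simp only [hpow] at hroot
  have hIcc := Finset.sum_Icc_pow_eq_pow_mul_sum_range β 0 k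
  rw [zero_add, zero_add, pow_one] at hIcc
  rw [Finset.sum_Icc_pow_eq_pow_mul_sum_range, hIcc, pow_succ', mul_assoc, hβk] at hroot
  exact (mul_left_cancel₀ hβ.ne' hroot).symm

theorem generators_relations_rank_r_general
    (k l r : ℕ) (hk : 0 < k) (α : ℝ) (hα : 0 < α)
    (hroot : ∑ i ∈ Finset.Icc (k + 1) (k + l), α ^ ((i : ℝ) / (k : ℝ))
              = ∑ i ∈ Finset.Icc 1 k, α ^ ((i : ℝ) / (k : ℝ))) :
    ∀ i ≤ r, ∀ j ≤ r,
      sdMulV r α (sdPowV r α (genE r k α i) k) (sdPowV r α (genE r k α j) l)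
        = sdMulV r α (sdPowV r α (genE r k α j) k)
            (sdPowV r α (genE r k α i) l) := by
  intro i _ j _
  refine sdMulV_sdPowV_swap r α (genE r k α i) (genE r k α j) rfl k l ?_
  have hpow (m : ℕ) : α ^ (((genE r k α i).2 : ℝ) * m) = (α ^ (1 / (k : ℝ))) ^ m := by
    simp [genE, ← Real.rpow_mul_natCast hα.le]
  have hk' : (k : ℝ) * (genE r k α i).2 = 1 := by
    simp only [genE, one_div, Rat.cast_inv, Rat.cast_natCast]
    exact mul_inv_cancel₀ (Nat.cast_ne_zero.mpr hk.ne')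
  simp only [hpow, hk', Real.rpow_one]
  exact sum_range_rpow_eq_mul_sum_range k l hk α hα hroot

theorem generators_relations_rank_r
    (k l r : ℕ) (hk : 0 < k) (hl : k ≤ l) (hr : 0 < r) (α : ℝ) (hα : 0 < α)
    (hroot : ∑ i ∈ Finset.Icc (k + 1) (k + l), α ^ ((i : ℝ) / (k : ℝ))
              = ∑ i ∈ Finset.Icc 1 k, α ^ ((i : ℝ) / (k : ℝ))) :
    ∀ i ≤ r, ∀ j ≤ r,
      sdMulV r α (sdPowV r α (genE r k α i) k) (sdPowV r α (genE r k α j) l)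
        = sdMulV r α (sdPowV r α (genE r k α j) k)
            (sdPowV r α (genE r k α i) l) :=
  generators_relations_rank_r_general k l r hk α hα hroot
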